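/- Energy inequality for one step of the monolithic IMEX-SD scheme in abstract form: if $a_{n+1} - a_n + \tau v_{n+1} \leq \tau v_n + \frac{\varepsilon\tau}{T}a_n + \left(\tau + \frac{T}{\varepsilon}\right)\tau f_{n+1}^2$ holds for all $0 \leq n \leq N-1$ with all quantities non-negative, $\tau = T/N$, $N \geq 2$, $\varepsilon > 0$, then $a_N + \tau v_N + \frac{\varepsilon\tau}{T}\sum_{n=1}^{N-1}\tau v_n \leq e^{\varepsilon}\left[\left(1 + \frac{\varepsilon\tau}{T}\right)a_0 + \tau v_0 + \left(\tau + \frac{T}{\varepsilon}\right)\sum_{n=1}^N \tau f_n^2\right]$. -/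

import Mathlib

/-!
With `α = ετ/T`, the augmented energy `E_m = a_m + τ v_m + α ∑_{n<m} τ v_n` satisfies the linear
recurrence `E_{m+1} ≤ (1 + α) E_m + (τ + T/ε) τ f_{m+1}²`: the summand `α τ v_m` added at step `m`
combines with the term `α a_m` of the one-step inequality into `α (a_m + τ v_m)`. The discrete
Grönwall inequality then bounds `E_N` by `e^{Nα} = e^ε` times `E_0` plus the accumulated forcing,
and `E_N` dominates the left-hand side.
-/

open Finset Real

theorem discrete_gronwall_range {u b c : ℕ → ℝ} {N : ℕ} (hu₀ : 0 ≤ u 0)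
    (hu : ∀ n < N, u (n + 1) ≤ (1 + c n) * u n + b n) (hc : ∀ n < N, 0 ≤ c n)
    (hb : ∀ n < N, 0 ≤ b n) :
    u N ≤ (u 0 + ∑ k ∈ range N, b k) * exp (∑ i ∈ range N, c i) := by
  -- Freeze the sequence after step `N`, so that the recurrence holds at every step.
  have key := discrete_gronwall (u := fun n ↦ u (min n N))
    (c := fun n ↦ if n < N then c n else 0) (b := fun n ↦ if n < N then b n else 0) (n₀ := 0)
    (by simpa using hu₀) (fun n _ ↦ ?_) (fun n _ ↦ ?_) (fun n _ ↦ ?_) (Nat.zero_le N)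
  · simpa [← range_eq_Ico, sum_ite_of_true fun _ ↦ mem_range.mp] using key
  · by_cases hn : n < N
    · simpa [hn, hn.le, Nat.add_one_le_of_lt hn] using hu n hn
    · simp [hn, show N ≤ n + 1 by omega, show N ≤ n by omega]
  · split_ifs with hn
    exacts [hc n hn, le_rfl]
  · split_ifs with hn
    exacts [hb n hn, le_rfl]

def augmentedEnergy (τ α : ℝ) (a v : ℕ → ℝ) (m : ℕ) : ℝ :=
  a m + τ * v m + α * ∑ n ∈ range m, τ * v n

theorem augmentedEnergy_succ_le {τ α c : ℝ} {a v : ℕ → ℝ} {m : ℕ} (hα : 0 ≤ α) (hτ : 0 ≤ τ)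
    (hv : ∀ n, 0 ≤ v n)
    (h : a (m + 1) - a m + τ * v (m + 1) ≤ τ * v m + α * a m + c) :
    augmentedEnergy τ α a v (m + 1) ≤ (1 + α) * augmentedEnergy τ α a v m + c := by
  have hsum : 0 ≤ α * (α * ∑ n ∈ range m, τ * v n) :=
    mul_nonneg hα (mul_nonneg hα (sum_nonneg fun n _ ↦ mul_nonneg hτ (hv n)))
  rw [augmentedEnergy, augmentedEnergy, sum_range_succ]
  linear_combination h + hsum

open Finset in
theorem monolithic_IMEX_SD_stability_general
    (N : ℕ) (hN : 2 ≤ N) (T ε : ℝ) (hT : 0 < T) (hε : 0 < ε)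
    (τ : ℝ) (hτ : τ = T / N)
    (a v f : ℕ → ℝ)
    (ha : ∀ n, 0 ≤ a n) (hv : ∀ n, 0 ≤ v n)
    (hrec : ∀ n, n ≤ N - 1 →
      a (n + 1) - a n + τ * v (n + 1) ≤
        τ * v n + (ε * τ / T) * a n + (τ + T / ε) * τ * f (n + 1) ^ 2) :
    a N + τ * v N + (ε * τ / T) * ∑ n ∈ Icc 1 (N - 1), τ * v n ≤
      Real.exp ε * ((1 + ε * τ / T) * a 0 + τ * v 0 +
        (τ + T / ε) * ∑ n ∈ Icc 1 N, τ * f n ^ 2) := by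
  have hN₀ : (N : ℝ) ≠ 0 := Nat.cast_ne_zero.mpr (by omega)
  have hτ₀ : 0 ≤ τ := hτ ▸ by positivity
  have hC : 0 ≤ τ + T / ε := add_nonneg hτ₀ (by positivity)
  set α := ε * τ / T with hα_def
  have hα : 0 ≤ α := div_nonneg (mul_nonneg hε.le hτ₀) hT.le
  have hαN : ∑ _ ∈ range N, α = ε := by
    rw [sum_const, card_range, nsmul_eq_mul, hα_def, hτ]
    field_simp
  have hforcing : ∑ k ∈ range N, (τ + T / ε) * τ * f (k + 1) ^ 2 =
      (τ + T / ε) * ∑ n ∈ Icc 1 N, τ * f n ^ 2 := by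
    rw [range_eq_Ico, sum_Ico_add' (fun k ↦ (τ + T / ε) * τ * f k ^ 2), zero_add,
      Ico_add_one_right_eq_Icc, mul_sum]
    simp only [mul_assoc]
  have hgronwall :=
    discrete_gronwall_range (u := augmentedEnergy τ α a v) (c := fun _ ↦ α) (N := N)
    (by simpa [augmentedEnergy] using add_nonneg (ha 0) (mul_nonneg hτ₀ (hv 0)))
    (fun n hn ↦ augmentedEnergy_succ_le hα hτ₀ hv (hrec n (by omega)))
    (fun _ _ ↦ hα) (fun n _ ↦ mul_nonneg (mul_nonneg hC hτ₀) (sq_nonneg _))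
  rw [hαN, hforcing] at hgronwall
  calc _ ≤ augmentedEnergy τ α a v N := by
        rw [augmentedEnergy]
        gcongr
        · exact fun n _ _ ↦ mul_nonneg hτ₀ (hv n)
        · intro n hn
          simp only [mem_Icc, mem_range] at hn ⊢
          omega
    _ ≤ _ := hgronwall.trans_eq (mul_comm _ _)
    _ ≤ _ := by
        gcongr
        simp only [augmentedEnergy, range_zero, sum_empty, mul_zero, add_zero]
        linarith [mul_nonneg hα (ha 0)]

open Finset in
/-- Energy inequality for the monolithic IMEX stress-divergence scheme (abstract form of
Theorem 3.3). -/
theorem monolithic_IMEX_SD_stability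
    (N : ℕ) (hN : 2 ≤ N) (T ε : ℝ) (hT : 0 < T) (hε : 0 < ε)
    (τ : ℝ) (hτ : τ = T / N)
    (a v f : ℕ → ℝ)
    (ha : ∀ n, 0 ≤ a n) (hv : ∀ n, 0 ≤ v n) (hf : ∀ n, 0 ≤ f n)
    (hrec : ∀ n, n ≤ N - 1 →
      a (n + 1) - a n + τ * v (n + 1) ≤
        τ * v n + (ε * τ / T) * a n + (τ + T / ε) * τ * f (n + 1) ^ 2) :
    a N + τ * v N + (ε * τ / T) * ∑ n ∈ Icc 1 (N - 1), τ * v n ≤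
      Real.exp ε * ((1 + ε * τ / T) * a 0 + τ * v 0 +
        (τ + T / ε) * ∑ n ∈ Icc 1 N, τ * f n ^ 2) :=
  monolithic_IMEX_SD_stability_general N hN T ε hT hε τ hτ a v f ha hv hrec
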